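/- Let M=(E,ρ) be a q-matroid with exactly one cyclic flat Ẑ (necessarily Ẑ = cl(0) = cyc(E) and ρ(Ẑ)=0). Then a subspace V is a flat if and only if Ẑ ≤ V, and V is open if and only if V ≤ Ẑ. In particular, cl(0)=E iff M is the trivial q-matroid U_0(E), and cyc(E)=0 iff M is the free q-matroid U_{dim E}(E). -/

import Mathlib

/-! The loops `cl ρ ⊥` form a subspace of rank zero, which is flat and is the sum of its
one-dimensional subspaces, all circuits; so it is a cyclic flat and equals `Ẑ`. The closure of an
open space is open, so the closure of a circuit is a cyclic flat too, and every circuit consists of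
loops. A complement of the loops of `V` is then independent, whence
`ρ V = dim V - dim (V ∩ Ẑ)`, and flats and open spaces can be read off. The two
characterisations of the trivial and the free q-matroid hold for every rank function. -/

open Submodule Module

namespace QM

variable (F : Type*) {E : Type*} [Field F] [AddCommGroup E] [Module F E]

/-- The rank axioms (R1)-(R3) of a q-matroid. -/
def IsRkFn (ρ : Submodule F E → ℕ) : Prop :=
  (∀ V : Submodule F E, ρ V ≤ finrank F V) ∧
  (∀ ⦃V W : Submodule F E⦄, V ≤ W → ρ V ≤ ρ W) ∧
  (∀ V W : Submodule F E, ρ (V ⊔ W) + ρ (V ⊓ W) ≤ ρ V + ρ W)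

variable {F}

/-- Independent spaces. -/
def Indep (ρ : Submodule F E → ℕ) (V : Submodule F E) : Prop := ρ V = finrank F V

/-- Circuits: dependent spaces all of whose proper subspaces are independent. -/
def IsCircuit (ρ : Submodule F E → ℕ) (C : Submodule F E) : Prop :=
  ¬ Indep ρ C ∧ ∀ D : Submodule F E, D < C → Indep ρ D

/-- Open spaces: sums of circuits. -/
def IsOpenSp (ρ : Submodule F E → ℕ) (V : Submodule F E) : Prop :=
  ∃ S : Set (Submodule F E), (∀ C ∈ S, IsCircuit ρ C) ∧ V = sSup S

/-- The cyclic core: the sum of all circuits contained in `V`. -/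
def cyc (ρ : Submodule F E → ℕ) (V : Submodule F E) : Submodule F E :=
  sSup {C : Submodule F E | IsCircuit ρ C ∧ C ≤ V}

/-- The closure operator: the sum of all `⟨x⟩` with `ρ(V + ⟨x⟩) = ρ V`. -/
def cl (ρ : Submodule F E → ℕ) (V : Submodule F E) : Submodule F E :=
  sSup {W : Submodule F E | ∃ x : E, ρ (V ⊔ span F {x}) = ρ V ∧ W = span F {x}}

/-- Flats. -/
def IsFlat (ρ : Submodule F E → ℕ) (V : Submodule F E) : Prop :=
  ∀ x : E, x ∉ V → ρ V < ρ (V ⊔ span F {x})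

/-- Cyclic flats. -/
def CyclicFlat (ρ : Submodule F E → ℕ) (V : Submodule F E) : Prop :=
  IsFlat ρ V ∧ IsOpenSp ρ V

end QM
theorem exists_sup_eq_and_inf_eq_bot_of_le {α : Type*} [Lattice α] [BoundedOrder α]
    [IsModularLattice α] [ComplementedLattice α] {a b : α} (h : a ≤ b) :
    ∃ c ≤ b, a ⊔ c = b ∧ a ⊓ c = ⊥ := by
  obtain ⟨c, hc⟩ := exists_isCompl a
  refine ⟨c ⊓ b, inf_le_right, ?_, ?_⟩
  · rw [← sup_inf_assoc_of_le c h, hc.sup_eq_top, top_inf_eq]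
  · rw [← inf_assoc, hc.inf_eq_bot, bot_inf_eq]

theorem Submodule.mem_sup_span_singleton_exchange {K V : Type*} [DivisionRing K]
    [AddCommGroup V] [Module K V] {W : Submodule K V} {x c : V}
    (hc : c ∈ W ⊔ span K {x}) (hcW : c ∉ W) : x ∈ W ⊔ span K {c} := by
  have hspan (y : V) : span K (insert y (W : Set V)) = W ⊔ span K {y} := by
    rw [span_insert, span_eq, sup_comm]
  rw [← hspan] at hc ⊢
  exact mem_span_insert_exchange hc (by rwa [span_eq])

namespace QM

section

variable {F E : Type*} [Field F] [AddCommGroup E] [Module F E] {ρ : Submodule F E → ℕ}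

namespace IsRkFn

theorem le_finrank (hρ : IsRkFn F ρ) (V : Submodule F E) : ρ V ≤ finrank F V := hρ.1 V

theorem mono (hρ : IsRkFn F ρ) {V W : Submodule F E} (h : V ≤ W) : ρ V ≤ ρ W := hρ.2.1 h

theorem submod (hρ : IsRkFn F ρ) (V W : Submodule F E) :
    ρ (V ⊔ W) + ρ (V ⊓ W) ≤ ρ V + ρ W :=
  hρ.2.2 V W

theorem map_bot (hρ : IsRkFn F ρ) : ρ ⊥ = 0 :=
  Nat.le_zero.mp ((hρ.le_finrank ⊥).trans_eq (finrank_bot F E))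

theorem sup_le_add (hρ : IsRkFn F ρ) (V W : Submodule F E) : ρ (V ⊔ W) ≤ ρ V + ρ W :=
  le_of_add_le_left (hρ.submod V W)

theorem sup_span_singleton_le (hρ : IsRkFn F ρ) (V : Submodule F E) (x : E) :
    ρ (V ⊔ span F {x}) ≤ ρ V + 1 := by
  have hx : finrank F (span F {x}) ≤ 1 := by
    rcases eq_or_ne x 0 with rfl | hx
    · rw [span_zero_singleton, finrank_bot]; omega
    · rw [finrank_span_singleton hx]
  have := hρ.le_finrank (span F {x})
  have := hρ.sup_le_add V (span F {x})
  omega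

theorem sup_sup_eq (hρ : IsRkFn F ρ) {V X Y : Submodule F E}
    (hX : ρ (V ⊔ X) = ρ V) (hY : ρ (V ⊔ Y) = ρ V) : ρ (V ⊔ X ⊔ Y) = ρ V := by
  have key := hρ.submod (V ⊔ X) (V ⊔ Y)
  rw [sup_sup_sup_comm, sup_idem, ← sup_assoc, hX, hY] at key
  have h₁ : ρ V ≤ ρ ((V ⊔ X) ⊓ (V ⊔ Y)) := hρ.mono (le_inf le_sup_left le_sup_left)
  have h₂ : ρ V ≤ ρ (V ⊔ X ⊔ Y) := hρ.mono (le_sup_left.trans le_sup_left)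
  omega

theorem sup_span_eq_of_forall (hρ : IsRkFn F ρ) (V : Submodule F E) (s : Finset E)
    (h : ∀ x ∈ s, ρ (V ⊔ span F {x}) = ρ V) : ρ (V ⊔ span F (s : Set E)) = ρ V := by
  classical
  induction s using Finset.induction_on with
  | empty => simp
  | insert a s _ ih =>
    rw [Finset.coe_insert, span_insert, sup_comm (span F {a}), ← sup_assoc]
    exact hρ.sup_sup_eq (ih fun x hx => h x (Finset.mem_insert_of_mem hx))
      (h a (Finset.mem_insert_self a s))

def closure (hρ : IsRkFn F ρ) (V : Submodule F E) : Submodule F E where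
  carrier := {x | ρ (V ⊔ span F {x}) = ρ V}
  zero_mem' := by simp
  add_mem' {a b} ha hb := by
    refine le_antisymm ((hρ.mono ?_).trans_eq (hρ.sup_sup_eq ha hb)) (hρ.mono le_sup_left)
    refine sup_le (le_sup_left.trans le_sup_left) ((span_singleton_le_iff_mem _ _).mpr ?_)
    exact add_mem (mem_sup_left (mem_sup_right (mem_span_singleton_self a)))
      (mem_sup_right (mem_span_singleton_self b))
  smul_mem' c x hx :=
    le_antisymm ((hρ.mono (sup_le_sup_left (span_singleton_smul_le F c x) V)).trans_eq hx)
      (hρ.mono le_sup_left)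

theorem cl_eq_closure (hρ : IsRkFn F ρ) (V : Submodule F E) : cl ρ V = hρ.closure V := by
  unfold cl
  refine le_antisymm (sSup_le ?_) fun x hx => ?_
  · rintro _ ⟨x, hx, rfl⟩
    exact (span_singleton_le_iff_mem _ _).mpr hx
  · have hmem : span F {x} ∈ {W | ∃ y, ρ (V ⊔ span F {y}) = ρ V ∧ W = span F {y}} :=
      ⟨x, hx, rfl⟩
    exact mem_sSup_of_mem hmem (mem_span_singleton_self x)

theorem mem_cl (hρ : IsRkFn F ρ) {V : Submodule F E} {x : E} :
    x ∈ cl ρ V ↔ ρ (V ⊔ span F {x}) = ρ V := by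
  rw [hρ.cl_eq_closure]
  rfl

theorem le_cl (hρ : IsRkFn F ρ) (V : Submodule F E) : V ≤ cl ρ V := fun x hx => by
  rw [hρ.mem_cl, sup_eq_left.mpr ((span_singleton_le_iff_mem _ _).mpr hx)]

theorem mem_cl_bot (hρ : IsRkFn F ρ) {x : E} : x ∈ cl ρ ⊥ ↔ ρ (span F {x}) = 0 := by
  rw [hρ.mem_cl, bot_sup_eq, hρ.map_bot]

end IsRkFn

theorem IsFlat.cl_bot_le {V : Submodule F E} (hV : IsFlat ρ V) (hρ : IsRkFn F ρ) :
    cl ρ ⊥ ≤ V := by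
  intro x hx
  by_contra hxV
  have hlt := hV x hxV
  have hle := hρ.sup_le_add V (span F {x})
  rw [hρ.mem_cl_bot] at hx
  omega

theorem indep_bot (hρ : IsRkFn F ρ) : Indep ρ ⊥ := by
  simp [Indep, hρ.map_bot]

theorem isCircuit_span_singleton (hρ : IsRkFn F ρ) {x : E} (hx : x ≠ 0)
    (h : ρ (span F {x}) = 0) : IsCircuit ρ (span F {x}) :=
  ⟨by simp [Indep, h, finrank_span_singleton hx],
    fun _ hD => ((nonzero_span_atom x hx).lt_iff.mp hD) ▸ indep_bot hρ⟩

theorem cyc_le (V : Submodule F E) : cyc ρ V ≤ V := sSup_le fun _ hC => hC.2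

theorem cyc_mono {V W : Submodule F E} (h : V ≤ W) : cyc ρ V ≤ cyc ρ W :=
  sSup_le_sSup fun _ hC => ⟨hC.1, hC.2.trans h⟩

theorem IsCircuit.le_cyc {C V : Submodule F E} (hC : IsCircuit ρ C) (h : C ≤ V) :
    C ≤ cyc ρ V :=
  le_sSup ⟨hC, h⟩

theorem isOpenSp_iff_le_cyc {V : Submodule F E} : IsOpenSp ρ V ↔ V ≤ cyc ρ V := by
  refine ⟨?_, fun h => ⟨_, fun _ hC => hC.1, (cyc_le V).antisymm' h⟩⟩
  rintro ⟨S, hS, rfl⟩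
  exact sSup_le fun C hC => (hS C hC).le_cyc (le_sSup hC)

theorem isOpenSp_of_rank_eq_zero (hρ : IsRkFn F ρ) {V : Submodule F E} (h : ρ V = 0) :
    IsOpenSp ρ V := by
  refine isOpenSp_iff_le_cyc.mpr fun x hx => ?_
  rcases eq_or_ne x 0 with rfl | hx0
  · exact zero_mem _
  have hxV : span F {x} ≤ V := (span_singleton_le_iff_mem _ _).mpr hx
  have hloop := isCircuit_span_singleton hρ hx0 (Nat.le_zero.mp (h ▸ hρ.mono hxV))
  exact hloop.le_cyc hxV (mem_span_singleton_self x)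

variable [FiniteDimensional F E]

theorem IsRkFn.add_finrank_le_of_le (hρ : IsRkFn F ρ) {D W : Submodule F E} (h : D ≤ W) :
    ρ W + finrank F D ≤ ρ D + finrank F W := by
  obtain ⟨U, hUW, hsup, hinf⟩ := exists_sup_eq_and_inf_eq_bot_of_le h
  have hdim := finrank_sup_add_finrank_inf_eq D U
  rw [hsup, hinf, finrank_bot] at hdim
  have hW := hρ.sup_le_add D U
  rw [hsup] at hW
  have hU := hρ.le_finrank U
  omega

theorem Indep.mono (hρ : IsRkFn F ρ) {D W : Submodule F E} (hW : Indep ρ W) (h : D ≤ W) :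
    Indep ρ D := by
  have := hρ.add_finrank_le_of_le h
  have := hρ.le_finrank D
  unfold Indep at *
  omega

theorem exists_isCircuit_le {V : Submodule F E} (h : ¬ Indep ρ V) :
    ∃ C ≤ V, IsCircuit ρ C := by
  obtain ⟨C, hCV, hC⟩ := exists_minimal_le_of_wellFoundedLT (fun C => ¬ Indep ρ C) V h
  exact ⟨C, hCV, hC.prop, fun _ hD => not_not.mp (hC.not_prop_of_lt hD)⟩

namespace IsRkFn

theorem rank_cl (hρ : IsRkFn F ρ) (V : Submodule F E) : ρ (cl ρ V) = ρ V := by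
  obtain ⟨s, hs⟩ := IsNoetherian.noetherian (cl ρ V)
  have hsV := hρ.sup_span_eq_of_forall V s fun x hx => hρ.mem_cl.mp (hs ▸ subset_span hx)
  rwa [hs, sup_eq_right.mpr (hρ.le_cl V)] at hsV

theorem isFlat_cl (hρ : IsRkFn F ρ) (V : Submodule F E) : IsFlat ρ (cl ρ V) := by
  intro x hx
  refine (hρ.mono le_sup_left).lt_of_ne fun heq => hx (hρ.mem_cl.mpr ?_)
  refine le_antisymm ?_ (hρ.mono le_sup_left)
  calc ρ (V ⊔ span F {x}) ≤ ρ (cl ρ V ⊔ span F {x}) :=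
        hρ.mono (sup_le_sup_right (hρ.le_cl V) _)
    _ = ρ V := by rw [← heq, hρ.rank_cl]

theorem exists_indep_le_rank_eq (hρ : IsRkFn F ρ) (V : Submodule F E) :
    ∃ W ≤ V, Indep ρ W ∧ ρ W = ρ V := by
  obtain ⟨W, ⟨hWV, hW⟩, hmax⟩ :=
    exists_maximal_of_wellFoundedGT (fun W => W ≤ V ∧ Indep ρ W)
      ⟨⊥, bot_le, indep_bot hρ⟩
  have hVW : V ≤ cl ρ W := by
    intro y hy
    by_cases hyW : y ∈ W
    · exact hρ.le_cl W hyW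
    have hyV : span F {y} ≤ V := (span_singleton_le_iff_mem _ _).mpr hy
    have hdep : ¬ Indep ρ (W ⊔ span F {y}) := fun hind =>
      hyW (hmax ⟨sup_le hWV hyV, hind⟩ le_sup_left (mem_sup_right (mem_span_singleton_self y)))
    have hle := hρ.sup_span_singleton_le W y
    have hge := hρ.mono (le_sup_left : W ≤ W ⊔ span F {y})
    unfold Indep at hW hdep
    rw [finrank_sup_span_singleton hyW] at hdep
    rw [hρ.mem_cl]
    omega
  exact ⟨W, hWV, hW, le_antisymm (hρ.mono hWV) ((hρ.mono hVW).trans_eq (hρ.rank_cl W))⟩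

theorem exists_isCircuit_mem_sup (hρ : IsRkFn F ρ) {V : Submodule F E} {x : E}
    (hx : x ∉ V) (h : ρ (V ⊔ span F {x}) = ρ V) :
    ∃ C, IsCircuit ρ C ∧ C ≤ V ⊔ span F {x} ∧ x ∈ V ⊔ C := by
  obtain ⟨W, hWV, hW, hWr⟩ := hρ.exists_indep_le_rank_eq V
  have hxW : x ∉ W := fun h => hx (hWV h)
  have hWx : W ⊔ span F {x} ≤ V ⊔ span F {x} := sup_le_sup_right hWV _
  have hdep : ¬ Indep ρ (W ⊔ span F {x}) := by
    have := hρ.mono hWx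
    unfold Indep at hW ⊢
    rw [finrank_sup_span_singleton hxW]
    omega
  obtain ⟨C, hCW, hC⟩ := exists_isCircuit_le hdep
  obtain ⟨c, hcC, hcW⟩ := SetLike.not_le_iff_exists.mp fun hle => hC.1 (hW.mono hρ hle)
  have hxc := mem_sup_span_singleton_exchange (hCW hcC) hcW
  refine ⟨C, hC, hCW.trans hWx, sup_le_sup hWV ?_ hxc⟩
  exact (span_singleton_le_iff_mem _ _).mpr hcC

theorem isOpenSp_cl (hρ : IsRkFn F ρ) {V : Submodule F E} (hV : IsOpenSp ρ V) :
    IsOpenSp ρ (cl ρ V) := by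
  refine isOpenSp_iff_le_cyc.mpr fun x hx => ?_
  have hVcyc : V ≤ cyc ρ (cl ρ V) :=
    (isOpenSp_iff_le_cyc.mp hV).trans (cyc_mono (hρ.le_cl V))
  by_cases hxV : x ∈ V
  · exact hVcyc hxV
  obtain ⟨C, hC, hCV, hxC⟩ := hρ.exists_isCircuit_mem_sup hxV (hρ.mem_cl.mp hx)
  have hxcl : span F {x} ≤ cl ρ V := (span_singleton_le_iff_mem _ _).mpr hx
  exact sup_le hVcyc (hC.le_cyc (hCV.trans (sup_le (hρ.le_cl V) hxcl))) hxC

theorem rank_cl_bot (hρ : IsRkFn F ρ) : ρ (cl ρ ⊥) = 0 := by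
  rw [hρ.rank_cl, hρ.map_bot]

theorem cl_bot_eq_top_iff (hρ : IsRkFn F ρ) : cl ρ ⊥ = ⊤ ↔ ∀ V, ρ V = 0 := by
  refine ⟨fun h V => ?_, fun h => eq_top_iff.mpr fun x _ => hρ.mem_cl_bot.mpr (h _)⟩
  exact Nat.le_zero.mp ((hρ.mono (h ▸ le_top)).trans_eq hρ.rank_cl_bot)

theorem cyc_top_eq_bot_iff (hρ : IsRkFn F ρ) :
    cyc ρ ⊤ = ⊥ ↔ ∀ V, ρ V = finrank F V := by
  refine ⟨fun h V => ?_, fun h => eq_bot_iff.mpr (sSup_le fun C hC => absurd (h C) hC.1.1)⟩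
  by_contra hV
  obtain ⟨C, -, hC⟩ := exists_isCircuit_le hV
  have hCbot : C = ⊥ := eq_bot_iff.mpr (h ▸ hC.le_cyc le_top)
  exact hC.1 (hCbot ▸ indep_bot hρ)

theorem cyclicFlat_cl_bot (hρ : IsRkFn F ρ) : CyclicFlat ρ (cl ρ ⊥) :=
  ⟨hρ.isFlat_cl ⊥, isOpenSp_of_rank_eq_zero hρ hρ.rank_cl_bot⟩

theorem cyclicFlat_cl_of_isCircuit (hρ : IsRkFn F ρ) {C : Submodule F E}
    (hC : IsCircuit ρ C) : CyclicFlat ρ (cl ρ C) :=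
  ⟨hρ.isFlat_cl C, hρ.isOpenSp_cl (isOpenSp_iff_le_cyc.mpr (hC.le_cyc le_rfl))⟩

theorem rank_add_finrank_inf_cl_bot (hρ : IsRkFn F ρ)
    (hcirc : ∀ C, IsCircuit ρ C → C ≤ cl ρ ⊥) (V : Submodule F E) :
    ρ V + finrank F ↥(V ⊓ cl ρ ⊥) = finrank F V := by
  -- a complement `U` of the loops of `V` contains no circuit, so it carries the whole rank
  obtain ⟨U, hUV, hsup, hinf⟩ :=
    exists_sup_eq_and_inf_eq_bot_of_le (inf_le_left : V ⊓ cl ρ ⊥ ≤ V)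
  have hU : Indep ρ U := by
    by_contra hdep
    obtain ⟨C, hCU, hC⟩ := exists_isCircuit_le hdep
    have hCbot : C = ⊥ :=
      eq_bot_iff.mpr (hinf ▸ le_inf (le_inf (hCU.trans hUV) (hcirc C hC)) hCU)
    exact hC.1 (hCbot ▸ indep_bot hρ)
  have hloops : ρ (V ⊓ cl ρ ⊥) = 0 :=
    Nat.le_zero.mp ((hρ.mono inf_le_right).trans_eq hρ.rank_cl_bot)
  have hdim := finrank_sup_add_finrank_inf_eq (V ⊓ cl ρ ⊥) U
  rw [hsup, hinf, finrank_bot] at hdim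
  have hle := hρ.sup_le_add (V ⊓ cl ρ ⊥) U
  rw [hsup] at hle
  have hge := hρ.mono hUV
  unfold Indep at hU
  omega

theorem isFlat_iff_cl_bot_le (hρ : IsRkFn F ρ)
    (hcirc : ∀ C, IsCircuit ρ C → C ≤ cl ρ ⊥) {V : Submodule F E} :
    IsFlat ρ V ↔ cl ρ ⊥ ≤ V := by
  refine ⟨fun hV => hV.cl_bot_le hρ, fun hle x hx => ?_⟩
  have h₁ := hρ.rank_add_finrank_inf_cl_bot hcirc V
  have h₂ := hρ.rank_add_finrank_inf_cl_bot hcirc (V ⊔ span F {x})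
  rw [inf_eq_right.mpr hle] at h₁
  rw [inf_eq_right.mpr (hle.trans le_sup_left), finrank_sup_span_singleton hx] at h₂
  omega

theorem isOpenSp_iff_le_cl_bot (hρ : IsRkFn F ρ)
    (hcirc : ∀ C, IsCircuit ρ C → C ≤ cl ρ ⊥) {V : Submodule F E} :
    IsOpenSp ρ V ↔ V ≤ cl ρ ⊥ :=
  ⟨fun hV => (isOpenSp_iff_le_cyc.mp hV).trans (sSup_le fun C hC => hcirc C hC.1),
    fun h => isOpenSp_of_rank_eq_zero hρ
      (Nat.le_zero.mp ((hρ.mono h).trans_eq hρ.rank_cl_bot))⟩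

end IsRkFn

end

variable {F E : Type*} [Field F] [Fintype F] [AddCommGroup E] [Module F E]
  [FiniteDimensional F E]

theorem stmt11_general (ρ : Submodule F E → ℕ) (hρ : IsRkFn F ρ)
    (Zhat : Submodule F E)
    (huniq : ∀ Z : Submodule F E, CyclicFlat ρ Z → Z = Zhat) :
    (∀ V : Submodule F E, IsFlat ρ V ↔ Zhat ≤ V) ∧
    (∀ V : Submodule F E, IsOpenSp ρ V ↔ V ≤ Zhat) ∧
    (cl ρ ⊥ = ⊤ ↔ ∀ V : Submodule F E, ρ V = 0) ∧
    (cyc ρ ⊤ = ⊥ ↔ ∀ V : Submodule F E, ρ V = finrank F V) := by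
  obtain rfl : Zhat = cl ρ ⊥ := (huniq _ hρ.cyclicFlat_cl_bot).symm
  have hcirc : ∀ C, IsCircuit ρ C → C ≤ cl ρ ⊥ := fun C hC =>
    huniq _ (hρ.cyclicFlat_cl_of_isCircuit hC) ▸ hρ.le_cl C
  exact ⟨fun _ => hρ.isFlat_iff_cl_bot_le hcirc, fun _ => hρ.isOpenSp_iff_le_cl_bot hcirc,
    hρ.cl_bot_eq_top_iff, hρ.cyc_top_eq_bot_iff⟩

theorem stmt11 (ρ : Submodule F E → ℕ) (hρ : IsRkFn F ρ)
    (Zhat : Submodule F E) (hZ : CyclicFlat ρ Zhat)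
    (huniq : ∀ Z : Submodule F E, CyclicFlat ρ Z → Z = Zhat) :
    (∀ V : Submodule F E, IsFlat ρ V ↔ Zhat ≤ V) ∧
    (∀ V : Submodule F E, IsOpenSp ρ V ↔ V ≤ Zhat) ∧
    (cl ρ ⊥ = ⊤ ↔ ∀ V : Submodule F E, ρ V = 0) ∧
    (cyc ρ ⊤ = ⊥ ↔ ∀ V : Submodule F E, ρ V = finrank F V) :=
  stmt11_general ρ hρ Zhat huniq

end QM
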